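/- Exterior decay of weighted orthonormal monomials (instance of Lemma 2.4(i) for the Ginibre potential): let 0 < τ₀ < 1 and a > 0. There exists a constant C > 0 such that for all integers n ≥ 1 and all integers j with τ₀ n ≤ j ≤ n − a√n, setting τ = j/n, one has for every ζ ∈ ℂ with √τ ≤ |ζ| ≤ 1 that |ζ|^{2j} e^{−n|ζ|²} / c_{j,n} ≤ C n · e^{−n(|ζ|² − τ − τ log(|ζ|²/τ))}. -/

import Mathlib

open MeasureTheory Real

/-- The Lebesgue area measure on `ℂ` divided by `π`, so the unit disk has measure 1. -/
noncomputable def dA : Measure ℂ := (ENNReal.ofReal Real.pi)⁻¹ • (volume : Measure ℂ)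

/-- `c_{j,n} = ∫_{|w| ≤ 1} |w|^{2j} e^{-n|w|²} dA(w)`. -/
noncomputable def cJN (j n : ℕ) : ℝ :=
  ∫ w in {w : ℂ | ‖w‖ ≤ 1}, ‖w‖ ^ (2 * j) * Real.exp (-(n : ℝ) * ‖w‖ ^ 2) ∂dA

/-!
On the annulus `τ ≤ |w|² ≤ τ + δ` the integrand of `c_{j,n}` is at least `τ^j e^{-n(τ+δ)}`, and the
annulus has `dA`-mass `δ`. Taking `δ = min(1, a)/n`, which fits below the unit circle because
`j/n ≤ 1 - a/√n`, gives `c_{j,n} ≥ τ^j e^{-j} · e^{-min(1,a)} min(1,a)/n`. Since `nτ = j`,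
`|ζ|^{2j} e^{-n|ζ|²} = τ^j e^{-j} e^{-n(|ζ|² - τ - τ log(|ζ|²/τ))}`, and dividing the two yields the
bound with `C = e^{min(1,a)}/min(1,a)`.
-/

open Metric

lemma dA_ball (a : ℂ) (r : ℝ) : dA (ball a r) = ENNReal.ofReal r ^ 2 := by
  rw [dA, Measure.smul_apply, Complex.volume_ball, smul_eq_mul, ← ENNReal.ofReal_coe_nnreal,
    NNReal.coe_real_pi, mul_left_comm,
    ENNReal.inv_mul_cancel (by simp [Real.pi_pos]) ENNReal.ofReal_ne_top, mul_one]

lemma dA_closedBall (a : ℂ) (r : ℝ) : dA (closedBall a r) = ENNReal.ofReal r ^ 2 := by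
  rw [← dA_ball, dA, Measure.smul_apply, Measure.smul_apply,
    Measure.addHaar_closedBall_eq_addHaar_ball]

instance isFiniteMeasureOnCompacts_dA : IsFiniteMeasureOnCompacts dA :=
  IsFiniteMeasureOnCompacts.smul _ (by simp [Real.pi_pos])

lemma dA_closedBall_sqrt_diff_ball_sqrt (a : ℂ) {s u : ℝ} (hs : 0 ≤ s) (hsu : s ≤ u) :
    dA (closedBall a √u \ ball a √s) = ENNReal.ofReal (u - s) := by
  have hsub : ball a √s ⊆ closedBall a √u :=
    ball_subset_closedBall.trans (closedBall_subset_closedBall (sqrt_le_sqrt hsu))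
  rw [measure_sdiff hsub measurableSet_ball.nullMeasurableSet (by simp [dA_ball]), dA_ball,
    dA_closedBall, ← ENNReal.ofReal_pow (sqrt_nonneg _), ← ENNReal.ofReal_pow (sqrt_nonneg _),
    sq_sqrt hs, sq_sqrt (hs.trans hsu), ENNReal.ofReal_sub _ hs]

lemma pow_mul_exp_le_on_annulus (j : ℕ) {N s u : ℝ} (hN : 0 ≤ N) (hs : 0 ≤ s) (hsu : s ≤ u)
    {w : ℂ} (hw : w ∈ closedBall (0 : ℂ) √u \ ball 0 √s) :
    s ^ j * exp (-N * u) ≤ ‖w‖ ^ (2 * j) * exp (-N * ‖w‖ ^ 2) := by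
  obtain ⟨hwu, hws⟩ := hw
  rw [mem_closedBall_zero_iff, le_sqrt (norm_nonneg w) (hs.trans hsu)] at hwu
  rw [mem_ball_zero_iff, not_lt, sqrt_le_left (norm_nonneg w)] at hws
  rw [pow_mul]
  exact mul_le_mul (pow_le_pow_left₀ hs hws j) (exp_le_exp.mpr (by nlinarith)) (exp_pos _).le
    (by positivity)

lemma cJN_ge_of_add_le_one (j n : ℕ) {s δ : ℝ} (hs : 0 ≤ s) (hδ : 0 ≤ δ) (hsδ : s + δ ≤ 1) :
    s ^ j * exp (-n * (s + δ)) * δ ≤ cJN j n := by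
  set A := closedBall (0 : ℂ) √(s + δ) \ ball 0 √s
  have hdisk : {w : ℂ | ‖w‖ ≤ 1} = closedBall 0 1 := by ext; simp
  have hint : IntegrableOn (fun w : ℂ => ‖w‖ ^ (2 * j) * exp (-n * ‖w‖ ^ 2))
      {w : ℂ | ‖w‖ ≤ 1} dA := by
    rw [hdisk]
    exact (by fun_prop : Continuous _).continuousOn.integrableOn_compact (isCompact_closedBall _ _)
  have hA : A ⊆ {w : ℂ | ‖w‖ ≤ 1} := fun w hw =>
    (mem_closedBall_zero_iff.mp hw.1).trans (sqrt_le_one.mpr hsδ)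
  have hmass : dA A = ENNReal.ofReal δ := by
    rw [dA_closedBall_sqrt_diff_ball_sqrt 0 hs (by linarith), add_sub_cancel_left]
  calc s ^ j * exp (-n * (s + δ)) * δ = s ^ j * exp (-n * (s + δ)) * (dA A).toReal := by
        rw [hmass, ENNReal.toReal_ofReal hδ]
    _ ≤ ∫ w in A, ‖w‖ ^ (2 * j) * exp (-n * ‖w‖ ^ 2) ∂dA :=
        setIntegral_ge_of_const_le_real (measurableSet_closedBall.diff measurableSet_ball)
          (by simp [hmass])
          (fun w hw => pow_mul_exp_le_on_annulus j n.cast_nonneg hs (by linarith) hw)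
          (hint.mono_set hA)
    _ ≤ cJN j n := setIntegral_mono_set hint (.of_forall fun w => by positivity) hA.eventuallyLE

lemma cJN_ge_of_le_sub_mul_sqrt {j n : ℕ} (hn : 1 ≤ n) {a : ℝ} (ha : 0 < a)
    (hj : (j : ℝ) ≤ n - a * √n) :
    ((j : ℝ) / n) ^ j * exp (-j) * (exp (-min 1 a) * min 1 a / n) ≤ cJN j n := by
  have hn0 : (0 : ℝ) < n := by exact_mod_cast hn
  have hsqrt : 1 ≤ √n := one_le_sqrt.mpr (by exact_mod_cast hn)
  have hjb : (j : ℝ) + min 1 a ≤ n := by nlinarith [min_le_right 1 a]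
  have hexp : exp (-n * (j / n + min 1 a / n)) = exp (-j) * exp (-min 1 a) := by
    rw [← exp_add]; congr 1; field_simp; ring
  calc ((j : ℝ) / n) ^ j * exp (-j) * (exp (-min 1 a) * min 1 a / n)
      = ((j : ℝ) / n) ^ j * exp (-n * (j / n + min 1 a / n)) * (min 1 a / n) := by
        rw [hexp]; ring
    _ ≤ cJN j n := cJN_ge_of_add_le_one j n (by positivity) (by positivity)
        (by rw [← add_div, div_le_one hn0]; exact hjb)

lemma pow_mul_exp_neg_eq {N τ t : ℝ} {j : ℕ} (hτ : 0 < τ) (ht : 0 < t) (hNτ : N * τ = j) :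
    t ^ j * exp (-N * t) = τ ^ j * exp (-j) * exp (-N * (t - τ - τ * log (t / τ))) := by
  have harg : -N * (t - τ - τ * log (t / τ)) = -N * t + j + j * log (t / τ) := by
    rw [← hNτ]; ring
  rw [harg, exp_add, exp_add, exp_nat_mul, exp_log (div_pos ht hτ), div_pow, exp_neg]
  field_simp

theorem exterior_decay_weighted_monomials_general (τ₀ a : ℝ) (hτ₀0 : 0 < τ₀)
    (ha : 0 < a) :
    ∃ C > (0 : ℝ), ∀ n : ℕ, 1 ≤ n → ∀ j : ℕ,
      τ₀ * n ≤ (j : ℝ) → (j : ℝ) ≤ (n : ℝ) - a * Real.sqrt n →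
      ∀ ζ : ℂ, Real.sqrt ((j : ℝ) / n) ≤ ‖ζ‖ → ‖ζ‖ ≤ 1 →
      ‖ζ‖ ^ (2 * j) * Real.exp (-(n : ℝ) * ‖ζ‖ ^ 2) / cJN j n ≤
        C * n * Real.exp (-(n : ℝ) * (‖ζ‖ ^ 2 - (j : ℝ) / n -
          ((j : ℝ) / n) * Real.log (‖ζ‖ ^ 2 / ((j : ℝ) / n)))) := by
  refine ⟨exp (min 1 a) / min 1 a, by positivity, fun n hn j hjlo hjhi ζ hζlo _ => ?_⟩
  have hn0 : (0 : ℝ) < n := by exact_mod_cast hn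
  have hτ : 0 < (j : ℝ) / n := div_pos ((mul_pos hτ₀0 hn0).trans_le hjlo) hn0
  have ht : (j : ℝ) / n ≤ ‖ζ‖ ^ 2 := (sqrt_le_left (norm_nonneg ζ)).mp hζlo
  have hc := cJN_ge_of_le_sub_mul_sqrt hn ha hjhi
  rw [pow_mul, pow_mul_exp_neg_eq hτ (hτ.trans_le ht) (mul_div_cancel₀ _ hn0.ne')]
  calc _ ≤ _ / (((j : ℝ) / n) ^ j * exp (-j) * (exp (-min 1 a) * min 1 a / n)) :=
        div_le_div_of_nonneg_left (by positivity) (by positivity) hc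
    _ = _ := by rw [exp_neg (min 1 a)]; field_simp

/-- Exterior decay of weighted orthonormal monomials (Ginibre case): for `τ₀ n ≤ j ≤ n − a√n`
and `√τ ≤ |ζ| ≤ 1` with `τ = j/n`,
`|ζ|^{2j} e^{−n|ζ|²}/c_{j,n} ≤ C n e^{−n(|ζ|² − τ − τ log(|ζ|²/τ))}`. -/
theorem exterior_decay_weighted_monomials (τ₀ a : ℝ) (hτ₀0 : 0 < τ₀) (hτ₀1 : τ₀ < 1)
    (ha : 0 < a) :
    ∃ C > (0 : ℝ), ∀ n : ℕ, 1 ≤ n → ∀ j : ℕ,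
      τ₀ * n ≤ (j : ℝ) → (j : ℝ) ≤ (n : ℝ) - a * Real.sqrt n →
      ∀ ζ : ℂ, Real.sqrt ((j : ℝ) / n) ≤ ‖ζ‖ → ‖ζ‖ ≤ 1 →
      ‖ζ‖ ^ (2 * j) * Real.exp (-(n : ℝ) * ‖ζ‖ ^ 2) / cJN j n ≤
        C * n * Real.exp (-(n : ℝ) * (‖ζ‖ ^ 2 - (j : ℝ) / n -
          ((j : ℝ) / n) * Real.log (‖ζ‖ ^ 2 / ((j : ℝ) / n)))) :=
  exterior_decay_weighted_monomials_general τ₀ a hτ₀0 ha
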